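/- Let 2 ≤ m ≤ n be integers and let L be the m×m lower triangular matrix with L_{ii} = √((m−i)/(m−i+1)) for i < m, L_{ij} = −1/√((m−j+1)(m−j)) for j < i, and L_{ij} = 0 otherwise. Then for every real m×n matrix W with W Wᵀ = I_m and W ξ_n = ξ_m there exists a real m×n matrix Q with Q Qᵀ = I_m whose m-th row equals ξ_nᵀ such that W = L Q + (1/√(mn)) J, where J is the m×n all-ones matrix. -/
import Mathlib

open Matrix Finset

noncomputable def Lf (m i j : ℕ) : ℝ :=
  if j < i then -(1 / Real.sqrt (((m : ℝ) - j) * ((m : ℝ) - j - 1)))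
  else if i = j ∧ i + 1 < m then Real.sqrt (((m : ℝ) - i - 1) / ((m : ℝ) - i))
  else 0

lemma Lf_sqrt_facts (c : ℝ) (hc : 2 ≤ c) :
    Real.sqrt ((c - 1) / c) = (c - 1) * (1 / Real.sqrt (c * (c - 1))) ∧
    Real.sqrt ((c - 1) / c) * (1 / Real.sqrt (c * (c - 1))) = 1 / c ∧
    (1 / Real.sqrt (c * (c - 1))) * (1 / Real.sqrt (c * (c - 1))) = 1 / (c * (c - 1)) ∧
    Real.sqrt ((c - 1) / c) * Real.sqrt ((c - 1) / c) = (c - 1) / c := by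
  have hc0 : (0:ℝ) < c := by linarith
  have hc1 : (0:ℝ) < c - 1 := by linarith
  have hs : Real.sqrt ((c - 1) / c) = Real.sqrt (c - 1) / Real.sqrt c :=
    Real.sqrt_div hc1.le c
  have hmm : Real.sqrt (c * (c - 1)) = Real.sqrt c * Real.sqrt (c - 1) :=
    Real.sqrt_mul hc0.le _
  have hcs : Real.sqrt c * Real.sqrt c = c := Real.mul_self_sqrt hc0.le
  have hcs1 : Real.sqrt (c - 1) * Real.sqrt (c - 1) = c - 1 := Real.mul_self_sqrt hc1.le
  have hsp : 0 < Real.sqrt c := Real.sqrt_pos.2 hc0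
  have hsp1 : 0 < Real.sqrt (c - 1) := Real.sqrt_pos.2 hc1
  refine ⟨?_, ?_, ?_, ?_⟩
  · rw [hs, hmm]; field_simp; nlinarith [hcs, hcs1, hsp, hsp1]
  · rw [hs, hmm]; field_simp; nlinarith [hcs, hcs1, hsp, hsp1]
  · rw [hmm]; field_simp; nlinarith [hcs, hcs1]
  · rw [hs]; rw [div_mul_div_comm, hcs, hcs1]

lemma Lf_colsum (m j : ℕ) (hj : j < m) :
    ∑ i ∈ Finset.range m, Lf m i j = 0 := by
  rw [Finset.range_eq_Ico, ← Finset.sum_Ico_consecutive _ (Nat.zero_le j) hj.le]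
  have h1 : ∑ i ∈ Finset.Ico 0 j, Lf m i j = 0 := by
    apply Finset.sum_eq_zero
    intro i hi
    simp only [Finset.mem_Ico] at hi
    simp only [Lf]
    rw [if_neg (by omega), if_neg (by omega)]
  rw [h1, zero_add, Finset.sum_eq_sum_Ico_succ_bot hj]
  have h2 : ∑ i ∈ Finset.Ico (j + 1) m, Lf m i j
      = (m - (j + 1)) • (-(1 / Real.sqrt (((m : ℝ) - j) * ((m : ℝ) - j - 1)))) := by
    rw [Finset.sum_congr rfl (fun i hi => by
      simp only [Finset.mem_Ico] at hi
      simp only [Lf]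
      rw [if_pos (show j < i by omega)]), Finset.sum_const, Nat.card_Ico]
  rw [h2]
  by_cases hj1 : j + 1 < m
  · have hc : (2:ℝ) ≤ (m:ℝ) - j := by
      have h : (j:ℝ) + 2 ≤ (m:ℝ) := by exact_mod_cast (by omega : j + 2 ≤ m)
      linarith
    obtain ⟨e1, e2, e3, e4⟩ := Lf_sqrt_facts ((m:ℝ) - j) hc
    have hcard : ((m - (j + 1) : ℕ) : ℝ) = (m:ℝ) - j - 1 := by
      rw [Nat.cast_sub (by omega)]; push_cast; ring
    simp only [Lf]
    rw [if_neg (show ¬ j < j by omega), if_pos (show True ∧ j + 1 < m from ⟨trivial, hj1⟩), nsmul_eq_mul, hcard, e1]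
    ring
  · simp only [Lf]
    rw [if_neg (show ¬ j < j by omega), if_neg (show ¬ (True ∧ j + 1 < m) by simp [hj1])]
    have h3 : m - (j + 1) = 0 := by omega
    simp [h3]

lemma Lf_LtL (m j k : ℕ) (hjk : j ≤ k) (hk : k < m) :
    ∑ i ∈ Finset.range m, Lf m i j * Lf m i k
      = if j = k ∧ k + 1 < m then 1 else 0 := by
  rw [Finset.range_eq_Ico, ← Finset.sum_Ico_consecutive _ (Nat.zero_le k) hk.le]
  have h1 : ∑ i ∈ Finset.Ico 0 k, Lf m i j * Lf m i k = 0 := by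
    apply Finset.sum_eq_zero
    intro i hi
    simp only [Finset.mem_Ico] at hi
    have hz : Lf m i k = 0 := by
      simp only [Lf]
      rw [if_neg (show ¬ k < i by omega), if_neg (show ¬ (i = k ∧ i + 1 < m) by omega)]
    rw [hz, mul_zero]
  rw [h1, zero_add, Finset.sum_eq_sum_Ico_succ_bot hk]
  have h2 : ∑ i ∈ Finset.Ico (k + 1) m, Lf m i j * Lf m i k
      = (m - (k + 1)) • ((-(1 / Real.sqrt (((m : ℝ) - j) * ((m : ℝ) - j - 1)))) *
        (-(1 / Real.sqrt (((m : ℝ) - k) * ((m : ℝ) - k - 1))))) := by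
    rw [Finset.sum_congr rfl (fun i hi => by
      simp only [Finset.mem_Ico] at hi
      simp only [Lf]
      rw [if_pos (show j < i by omega), if_pos (show k < i by omega)]),
      Finset.sum_const, Nat.card_Ico]
  rw [h2]
  by_cases hk1 : k + 1 < m
  · have hck : (2:ℝ) ≤ (m:ℝ) - k := by
      have h : (k:ℝ) + 2 ≤ (m:ℝ) := by exact_mod_cast (by omega : k + 2 ≤ m)
      linarith
    obtain ⟨ek1, ek2, ek3, ek4⟩ := Lf_sqrt_facts ((m:ℝ) - k) hck
    have hcard : ((m - (k + 1) : ℕ) : ℝ) = (m:ℝ) - k - 1 := by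
      rw [Nat.cast_sub (by omega)]; push_cast; ring
    rcases eq_or_lt_of_le hjk with rfl | hjk'
    · rw [if_pos ⟨rfl, hk1⟩]
      simp only [Lf]
      rw [if_neg (show ¬ j < j by omega), if_pos (show True ∧ j + 1 < m from ⟨trivial, hk1⟩),
        ek4, nsmul_eq_mul, hcard, neg_mul_neg, ek3]
      have hne : (m:ℝ) - j ≠ 0 := by linarith
      have hne1 : (m:ℝ) - j - 1 ≠ 0 := by linarith
      field_simp
      ring
    · rw [if_neg (show ¬ (j = k ∧ k + 1 < m) by omega)]
      simp only [Lf]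
      rw [if_pos (show j < k from hjk'), if_neg (show ¬ k < k by omega),
        if_pos (show True ∧ k + 1 < m from ⟨trivial, hk1⟩), ek1, nsmul_eq_mul, hcard]
      ring
  · rw [if_neg (show ¬ (j = k ∧ k + 1 < m) by omega)]
    have hz : Lf m k k = 0 := by
      simp only [Lf]
      rw [if_neg (show ¬ k < k by omega), if_neg (show ¬ (True ∧ k + 1 < m) by simp [hk1])]
    have h3 : m - (k + 1) = 0 := by omega
    rw [hz, mul_zero, h3, zero_smul, add_zero]

lemma Lf_LLt (m i k : ℕ) (hm : 2 ≤ m) (hik : i ≤ k) (hk : k < m) :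
    ∑ j ∈ Finset.range m, Lf m i j * Lf m k j
      = (if i = k then 1 else 0) - 1 / (m : ℝ) := by
  have hi1 : i + 1 ≤ m := by omega
  rw [Finset.range_eq_Ico, ← Finset.sum_Ico_consecutive _ (Nat.zero_le (i + 1)) hi1]
  have h2 : ∑ j ∈ Finset.Ico (i + 1) m, Lf m i j * Lf m k j = 0 := by
    apply Finset.sum_eq_zero
    intro j hj
    simp only [Finset.mem_Ico] at hj
    have hz : Lf m i j = 0 := by
      simp only [Lf]
      rw [if_neg (show ¬ j < i by omega), if_neg (show ¬ (i = j ∧ i + 1 < m) by omega)]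
    rw [hz, zero_mul]
  rw [h2, add_zero, ← Finset.range_eq_Ico, Finset.sum_range_succ]
  have h3 : ∑ j ∈ Finset.range i, Lf m i j * Lf m k j
      = ((m:ℝ) - i)⁻¹ - ((m:ℝ))⁻¹ := by
    rw [show ((m:ℝ) - i)⁻¹ - ((m:ℝ))⁻¹
        = (fun j : ℕ => ((m:ℝ) - j)⁻¹) i - (fun j : ℕ => ((m:ℝ) - j)⁻¹) 0 by norm_num,
      ← Finset.sum_range_sub (fun j : ℕ => ((m:ℝ) - j)⁻¹) i]
    apply Finset.sum_congr rfl
    intro j hj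
    simp only [Finset.mem_range] at hj
    have hc : (2:ℝ) ≤ (m:ℝ) - j := by
      have h : (j:ℝ) + 2 ≤ (m:ℝ) := by exact_mod_cast (by omega : j + 2 ≤ m)
      linarith
    obtain ⟨e1, e2, e3, e4⟩ := Lf_sqrt_facts ((m:ℝ) - j) hc
    simp only [Lf]
    rw [if_pos (show j < i by omega), if_pos (show j < k by omega), neg_mul_neg, e3]
    have h0 : (m:ℝ) - j ≠ 0 := by linarith
    have h1 : (m:ℝ) - j - 1 ≠ 0 := by linarith
    rw [show ((m:ℝ) - ((j:ℕ)+1 : ℕ)) = (m:ℝ) - j - 1 by push_cast; ring]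
    field_simp
    ring
  rw [h3]
  have hm0 : ((m:ℝ)) ≠ 0 := by positivity
  rcases eq_or_lt_of_le hik with rfl | hik'
  · rw [if_pos rfl]
    by_cases hk1 : i + 1 < m
    · have hc : (2:ℝ) ≤ (m:ℝ) - i := by
        have h : (i:ℝ) + 2 ≤ (m:ℝ) := by exact_mod_cast (by omega : i + 2 ≤ m)
        linarith
      obtain ⟨e1, e2, e3, e4⟩ := Lf_sqrt_facts ((m:ℝ) - i) hc
      simp only [Lf]
      rw [if_neg (show ¬ i < i by omega), if_pos (show True ∧ i + 1 < m from ⟨trivial, hk1⟩), e4]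
      have hne : (m:ℝ) - i ≠ 0 := by linarith
      field_simp
      ring
    · have hz : Lf m i i = 0 := by
        simp only [Lf]
        rw [if_neg (show ¬ i < i by omega), if_neg (show ¬ (True ∧ i + 1 < m) by simp [hk1])]
      rw [hz, mul_zero, add_zero]
      have hmi : (m:ℝ) - i = 1 := by
        have : i + 1 = m := by omega
        have h : ((i:ℝ)) + 1 = (m:ℝ) := by exact_mod_cast this
        linarith
      rw [hmi]
      norm_num
  · rw [if_neg (by omega : ¬ i = k)]
    have hc : (2:ℝ) ≤ (m:ℝ) - i := by
      have h : (i:ℝ) + 2 ≤ (m:ℝ) := by exact_mod_cast (by omega : i + 2 ≤ m)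
      linarith
    obtain ⟨e1, e2, e3, e4⟩ := Lf_sqrt_facts ((m:ℝ) - i) hc
    simp only [Lf]
    rw [if_neg (show ¬ i < i by omega), if_pos (show True ∧ i + 1 < m by exact ⟨trivial, by omega⟩),
      if_pos (show i < k from hik'), mul_neg, e2]
    ring
/-- Let `2 ≤ m ≤ n` and let `L` be the explicit Cholesky factor of the
centering matrix (0-based indices below; the 1-based index `i` corresponds to `i+1`).
Then every `m × n` real matrix `W` with `W * Wᵀ = 1` and `W ξₙ = ξₘ` can be written as
`W = L * Q + (1/√(m*n)) J` for some `m × n` matrix `Q` with `Q * Qᵀ = 1` whose last row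
equals `ξₙᵀ`. -/
theorem optimal_eq_cholesky_construction
    (m n : ℕ) (hm : 2 ≤ m) (hmn : m ≤ n)
    (L : Matrix (Fin m) (Fin m) ℝ)
    (hL : ∀ i j : Fin m, L i j =
      if j < i then -(1 / Real.sqrt (((m : ℝ) - j) * ((m : ℝ) - j - 1)))
      else if i = j ∧ (i : ℕ) + 1 < m then Real.sqrt (((m : ℝ) - i - 1) / ((m : ℝ) - i))
      else 0)
    (W : Matrix (Fin m) (Fin n) ℝ)
    (hW : W * Wᵀ = 1)
    (hWxi : W.mulVec (fun _ : Fin n => 1 / Real.sqrt n) = fun _ : Fin m => 1 / Real.sqrt m) :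
    ∃ Q : Matrix (Fin m) (Fin n) ℝ,
      Q * Qᵀ = 1 ∧
      (∀ j : Fin n, Q ⟨m - 1, by omega⟩ j = 1 / Real.sqrt n) ∧
      W = L * Q + (1 / Real.sqrt ((m : ℝ) * n)) • Matrix.of (fun _ _ => (1 : ℝ)) := by
  classical
  have hn2 : 2 ≤ n := le_trans hm hmn
  have hm0 : (0:ℝ) < m := by exact_mod_cast (by omega : 0 < m)
  have hn0 : (0:ℝ) < n := by exact_mod_cast (by omega : 0 < n)
  have hsm : (0:ℝ) < Real.sqrt m := Real.sqrt_pos.2 hm0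
  have hsn : (0:ℝ) < Real.sqrt n := Real.sqrt_pos.2 hn0
  have hmsq : Real.sqrt m * Real.sqrt m = (m:ℝ) := Real.mul_self_sqrt hm0.le
  have hnsq : Real.sqrt n * Real.sqrt n = (n:ℝ) := Real.mul_self_sqrt hn0.le
  have hm1 : m - 1 < m := by omega
  -- cast to the ℕ-indexed function
  have hLcast : ∀ i j : Fin m, L i j = Lf m i j := by
    intro i j
    rw [hL]
    simp only [Lf, Fin.lt_def, Fin.ext_iff]
  have hcol : ∀ j : Fin m, ∑ i : Fin m, L i j = 0 := by
    intro j
    simp only [hLcast]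
    rw [Fin.sum_univ_eq_sum_range (fun t => Lf m t j)]
    exact Lf_colsum m j j.isLt
  have hLtL : ∀ j k : Fin m, ∑ i : Fin m, L i j * L i k
      = if j = k ∧ (j:ℕ) + 1 < m then 1 else 0 := by
    intro j k
    simp only [hLcast]
    rw [Fin.sum_univ_eq_sum_range (fun t => Lf m t j * Lf m t k)]
    rcases le_total (j:ℕ) (k:ℕ) with h | h
    · rw [Lf_LtL m j k h k.isLt]
      have hiff : ((j:ℕ) = (k:ℕ) ∧ (k:ℕ) + 1 < m) ↔ (j = k ∧ (j:ℕ) + 1 < m) := by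
        simp only [Fin.ext_iff]; omega
      rw [if_congr hiff rfl rfl]
    · rw [Finset.sum_congr rfl (fun t _ => mul_comm (Lf m t j) (Lf m t k)), Lf_LtL m k j h j.isLt]
      have hiff : ((k:ℕ) = (j:ℕ) ∧ (j:ℕ) + 1 < m) ↔ (j = k ∧ (j:ℕ) + 1 < m) := by
        simp only [Fin.ext_iff]; omega
      rw [if_congr hiff rfl rfl]
  have hLLt : ∀ i k : Fin m, ∑ j : Fin m, L i j * L k j
      = (if i = k then 1 else 0) - 1/(m:ℝ) := by
    intro i k
    simp only [hLcast]
    rw [Fin.sum_univ_eq_sum_range (fun t => Lf m i t * Lf m k t)]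
    rcases le_total (i:ℕ) (k:ℕ) with h | h
    · rw [Lf_LLt m i k hm h k.isLt]
      have hiff : ((i:ℕ) = (k:ℕ)) ↔ (i = k) := Fin.ext_iff.symm
      rw [if_congr hiff rfl rfl]
    · rw [Finset.sum_congr rfl (fun t _ => mul_comm (Lf m i t) (Lf m k t)), Lf_LLt m k i hm h i.isLt]
      have hiff : ((k:ℕ) = (i:ℕ)) ↔ (i = k) := by
        simp only [Fin.ext_iff]; omega
      rw [if_congr hiff rfl rfl]
  -- facts about W
  have hWe : ∀ i k : Fin m, ∑ j, W i j * W k j = if i = k then (1:ℝ) else 0 := by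
    intro i k
    have h := congrFun (congrFun hW i) k
    simpa [Matrix.mul_apply, Matrix.one_apply] using h
  have hWx : ∀ i : Fin m, ∑ j, W i j * (1 / Real.sqrt n) = 1 / Real.sqrt m := by
    intro i
    have h := congrFun hWxi i
    simpa [Matrix.mulVec, dotProduct] using h
  have hWrow : ∀ i : Fin m, ∑ j : Fin n, W i j = Real.sqrt n / Real.sqrt m := by
    intro i
    have h := hWx i
    rw [← Finset.sum_mul] at h
    field_simp at h ⊢
    linarith [h]
  have hWcol : ∀ j : Fin n, ∑ i : Fin m, W i j = Real.sqrt m / Real.sqrt n := by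
    have key : ∑ j : Fin n, ((∑ i : Fin m, W i j) - Real.sqrt m / Real.sqrt n)^2 = 0 := by
      have hexp : ∀ j : Fin n, ((∑ i : Fin m, W i j) - Real.sqrt m / Real.sqrt n)^2
          = (∑ i : Fin m, W i j) * (∑ i : Fin m, W i j)
            - 2 * (Real.sqrt m / Real.sqrt n) * (∑ i : Fin m, W i j)
            + (Real.sqrt m / Real.sqrt n) * (Real.sqrt m / Real.sqrt n) := fun j => by ring
      rw [Finset.sum_congr rfl fun j _ => hexp j, Finset.sum_add_distrib, Finset.sum_sub_distrib]
      have s1 : ∑ j : Fin n, (∑ i : Fin m, W i j) * (∑ i : Fin m, W i j) = (m:ℝ) := by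
        have step : ∀ j : Fin n, (∑ i : Fin m, W i j) * (∑ i : Fin m, W i j)
            = ∑ i : Fin m, ∑ k : Fin m, W i j * W k j := fun j => by
          rw [Finset.sum_mul]
          exact Finset.sum_congr rfl fun i _ => Finset.mul_sum _ _ _
        rw [Finset.sum_congr rfl fun j _ => step j, Finset.sum_comm]
        rw [Finset.sum_congr rfl fun i _ => Finset.sum_comm]
        rw [Finset.sum_congr rfl fun i _ => Finset.sum_congr rfl fun k _ => hWe i k]
        simp
      have s2 : ∑ j : Fin n, 2 * (Real.sqrt m / Real.sqrt n) * (∑ i : Fin m, W i j)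
          = 2 * (m:ℝ) := by
        rw [← Finset.mul_sum, Finset.sum_comm]
        rw [Finset.sum_congr rfl fun i _ => hWrow i]
        rw [Finset.sum_const, Finset.card_univ, Fintype.card_fin, nsmul_eq_mul]
        field_simp
      have s3 : ∑ j : Fin n, (Real.sqrt m / Real.sqrt n) * (Real.sqrt m / Real.sqrt n) = (m:ℝ) := by
        rw [Finset.sum_const, Finset.card_univ, Fintype.card_fin, nsmul_eq_mul,
          div_mul_div_comm, hmsq, hnsq]
        field_simp
      rw [s1, s2, s3]; ring
    intro j
    have h := (Finset.sum_eq_zero_iff_of_nonneg (fun j _ => sq_nonneg _)).1 key j (Finset.mem_univ j)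
    have h2 := pow_eq_zero_iff (n := 2) (by norm_num) |>.1 h
    linarith [sub_eq_zero.1 h2]
  -- the construction
  have hlz : ∀ t : Fin m, L t ⟨m - 1, hm1⟩ = 0 := by
    intro t
    rw [hL]
    rw [if_neg (show ¬ (⟨m - 1, hm1⟩ : Fin m) < t from by
        rw [Fin.lt_def]; have := t.isLt; simp; omega),
      if_neg (show ¬ (t = ⟨m - 1, hm1⟩ ∧ (t:ℕ) + 1 < m) from by
        rintro ⟨rfl, h2⟩; simp at h2; omega)]
  refine ⟨(Matrix.of fun i j : Fin m =>
      L j i + if i = (⟨m - 1, hm1⟩ : Fin m) then 1 / Real.sqrt m else 0) * W, ?_, ?_, ?_⟩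
  · rw [Matrix.transpose_mul, ← Matrix.mul_assoc, Matrix.mul_assoc _ W Wᵀ, hW, Matrix.mul_one]
    ext i k
    rw [Matrix.mul_apply, Matrix.one_apply]
    simp only [Matrix.of_apply, Matrix.transpose_apply]
    have hexp : ∀ j : Fin m,
        (L j i + if i = (⟨m - 1, hm1⟩ : Fin m) then 1 / Real.sqrt m else 0) *
          (L j k + if k = (⟨m - 1, hm1⟩ : Fin m) then 1 / Real.sqrt m else 0)
        = L j i * L j k
          + ((if i = (⟨m - 1, hm1⟩ : Fin m) then 1 / Real.sqrt m else 0) * L j k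
          + (L j i * (if k = (⟨m - 1, hm1⟩ : Fin m) then 1 / Real.sqrt m else 0)
          + (if i = (⟨m - 1, hm1⟩ : Fin m) then 1 / Real.sqrt m else 0) *
            (if k = (⟨m - 1, hm1⟩ : Fin m) then 1 / Real.sqrt m else 0))) := fun j => by ring
    rw [Finset.sum_congr rfl fun j _ => hexp j, Finset.sum_add_distrib, Finset.sum_add_distrib,
      Finset.sum_add_distrib, ← Finset.mul_sum, ← Finset.sum_mul, hcol i, hcol k, hLtL i k,
      Finset.sum_const, Finset.card_univ, Fintype.card_fin, nsmul_eq_mul, mul_zero, zero_mul,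
      zero_add, zero_add]
    by_cases hik : i = k
    · subst hik
      by_cases hil : i = (⟨m - 1, hm1⟩ : Fin m)
      · rw [if_pos rfl, if_neg (show ¬ (i = i ∧ (i:ℕ) + 1 < m) from by
          rintro ⟨-, h2⟩; rw [hil] at h2; simp at h2; omega)]
        rw [if_pos hil, zero_add, div_mul_div_comm, one_mul, hmsq]
        field_simp
      · rw [if_pos rfl, if_pos (⟨rfl, by
          have h1 := i.isLt
          have h2 : (i:ℕ) ≠ m - 1 := fun h => hil (Fin.ext (by simp [h]))
          omega⟩ : i = i ∧ (i:ℕ) + 1 < m)]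
        rw [if_neg hil, mul_zero, mul_zero, add_zero]
    · rw [if_neg hik, if_neg (fun h => hik h.1)]
      have hz : (if i = (⟨m - 1, hm1⟩ : Fin m) then 1 / Real.sqrt m else 0) *
          (if k = (⟨m - 1, hm1⟩ : Fin m) then 1 / Real.sqrt m else 0) = 0 := by
        by_cases hil : i = (⟨m - 1, hm1⟩ : Fin m)
        · by_cases hkl : k = (⟨m - 1, hm1⟩ : Fin m)
          · exact absurd (hil.trans hkl.symm) hik
          · rw [if_neg hkl, mul_zero]
        · rw [if_neg hil, zero_mul]
      rw [hz, mul_zero, add_zero]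
  · intro j
    have key : ∀ r : Fin m, (r:ℕ) = m - 1 →
        ((Matrix.of fun i j : Fin m =>
          L j i + if i = (⟨m - 1, hm1⟩ : Fin m) then 1 / Real.sqrt m else 0) * W) r j
          = 1 / Real.sqrt n := by
      intro r hr
      rw [Matrix.mul_apply]
      simp only [Matrix.of_apply]
      have hrow : ∀ t : Fin m,
          (L t r + if r = (⟨m - 1, hm1⟩ : Fin m) then 1 / Real.sqrt m else 0) * W t j
            = (1 / Real.sqrt m) * W t j := by
        intro t
        have hre : r = (⟨m - 1, hm1⟩ : Fin m) := Fin.ext hr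
        rw [hre, hlz t, zero_add, if_pos rfl]
      rw [Finset.sum_congr rfl fun t _ => hrow t, ← Finset.mul_sum, hWcol j,
        div_mul_div_comm, one_mul, div_eq_div_iff (by positivity) (by positivity), one_mul]
    exact key _ rfl
  · rw [← Matrix.mul_assoc]
    have hLA : L * (Matrix.of fun i j : Fin m =>
        L j i + if i = (⟨m - 1, hm1⟩ : Fin m) then 1 / Real.sqrt m else 0)
        = 1 - (1/(m:ℝ)) • Matrix.of (fun _ _ : Fin m => (1:ℝ)) := by
      ext i k
      rw [Matrix.mul_apply]
      simp only [Matrix.of_apply, Matrix.sub_apply, Matrix.smul_apply, Matrix.one_apply,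
        smul_eq_mul, mul_one]
      have hexp : ∀ t : Fin m, L i t * (L k t + if t = (⟨m - 1, hm1⟩ : Fin m) then 1 / Real.sqrt m else 0)
          = L i t * L k t + L i t * (if t = (⟨m - 1, hm1⟩ : Fin m) then 1 / Real.sqrt m else 0) :=
        fun t => by ring
      rw [Finset.sum_congr rfl fun t _ => hexp t, Finset.sum_add_distrib, hLLt i k]
      have hz : ∑ t : Fin m, L i t * (if t = (⟨m - 1, hm1⟩ : Fin m) then 1 / Real.sqrt m else 0) = 0 := by
        simp only [mul_ite, mul_zero]
        rw [Finset.sum_ite_eq' Finset.univ (⟨m - 1, hm1⟩ : Fin m) (fun t => L i t * (1 / Real.sqrt m))]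
        rw [if_pos (Finset.mem_univ _), hlz i, zero_mul]
      rw [hz, add_zero]
    rw [hLA, Matrix.sub_mul, Matrix.one_mul]
    have hJ : ((1/(m:ℝ)) • (Matrix.of fun _ _ : Fin m => (1:ℝ))) * W
        = (1 / Real.sqrt ((m:ℝ) * n)) • Matrix.of (fun (_ : Fin m) (_ : Fin n) => (1:ℝ)) := by
      ext i j
      rw [Matrix.smul_mul, Matrix.smul_apply, Matrix.mul_apply]
      simp only [Matrix.of_apply, one_mul, smul_eq_mul, Matrix.smul_apply]
      rw [hWcol j, Real.sqrt_mul hm0.le, mul_one, div_mul_div_comm, one_mul,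
        div_eq_div_iff (by positivity) (by positivity), one_mul, ← mul_assoc, hmsq]
    rw [hJ]
    ext i j
    simp only [Matrix.add_apply, Matrix.sub_apply]
    ring
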